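/- Let ρ be a two-qubit density matrix, i.e. a Hermitian positive-semidefinite matrix of trace 1 indexed by (Fin 2 → Fin 2). Let R be the real 3×3 matrix with entries R(i, j) = Re Tr(ρ · σ_i⊗σ_j) for i, j ∈ {1,2,3}, and let u₁² ≥ u₂² ≥ u₃² denote the three eigenvalues of RᵀR. Then 2√(u₁² + u₂²) is the maximum of the set { Re Tr(ρ · B₂) : B₂ a two-qubit Bell operator }, i.e. every Bell operator satisfies Re Tr(ρ · B₂) ≤ 2√(u₁² + u₂²) and some Bell operator attains this value. -/

import Mathlib

/-!
With `A₁ = a·σ`, `A₁′ = a'·σ`, `A₂ = b·σ`, `A₂′ = b'·σ`, the expectation `Re Tr(ρ B₂)` equals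
`⟪a, R (b + b')⟫ + ⟪a', R (b - b')⟫` for the correlation matrix `R`. For unit `a, a'` this is at
most `‖R c‖ + ‖R c'‖`, where `c = b + b'` and `c' = b - b'` are orthogonal with
`‖c‖² + ‖c'‖² = 4`; the Rayleigh bound and Ky Fan's inequality for the Gram operator `RᵀR` then
give `2√(u₁² + u₂²)`. Equality holds when `b ± b'` point along the top two eigenvectors of `RᵀR`
with weights `√u₁²`, `√u₂²`, and `a, a'` along `R (b ± b')`. The argument is carried out for an
arbitrary linear map `T` between real inner product spaces, the squared singular values of `T`
playing the role of `u₁², u₂²`.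
-/

open Matrix Complex Polynomial
open scoped ComplexOrder

noncomputable section

/-- The three Pauli matrices σ_x, σ_y, σ_z. -/
def pauli : Fin 3 → Matrix (Fin 2) (Fin 2) ℂ :=
  ![!![0, 1; 1, 0], !![0, -Complex.I; Complex.I, 0], !![1, 0; 0, -1]]

/-- Kronecker product of `n` 2×2 matrices, as a matrix on `(Fin n → Fin 2)`. -/
def kron {n : ℕ} (M : Fin n → Matrix (Fin 2) (Fin 2) ℂ) :
    Matrix (Fin n → Fin 2) (Fin n → Fin 2) ℂ :=
  Matrix.of fun f g => ∏ k, M k (f k) (g k)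

/-- The operator a¹σ_x + a²σ_y + a³σ_z associated to a vector a ∈ ℝ³. -/
def opOf (a : Fin 3 → ℝ) : Matrix (Fin 2) (Fin 2) ℂ :=
  ∑ i, (a i : ℂ) • pauli i

/-- `B` is an `n`-qubit Bell operator:
`B = A₁⊗⋯⊗A_{n-1}⊗(A_n + A_n′) + A₁′⊗⋯⊗A_{n-1}′⊗(A_n − A_n′)`
for unit vectors `a k`, `a' k` in ℝ³. -/
def IsBellOp (n : ℕ) (B : Matrix (Fin n → Fin 2) (Fin n → Fin 2) ℂ) : Prop :=
  ∃ a a' : Fin n → Fin 3 → ℝ,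
    (∀ k, ∑ i, (a k i) ^ 2 = 1) ∧ (∀ k, ∑ i, (a' k i) ^ 2 = 1) ∧
    B = kron (fun k => if (k : ℕ) = n - 1 then opOf (a k) + opOf (a' k) else opOf (a k))
      + kron (fun k => if (k : ℕ) = n - 1 then opOf (a k) - opOf (a' k) else opOf (a' k))

/-- The generalized R-matrix of an `n`-qubit density matrix:
`R(I, j) = Re Tr(ρ · σ_{i₁}⊗⋯⊗σ_{i_{n-1}}⊗σ_j)`. -/
def Rmat {n : ℕ} (ρ : Matrix (Fin n → Fin 2) (Fin n → Fin 2) ℂ)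
    (I : Fin (n - 1) → Fin 3) (j : Fin 3) : ℝ :=
  (Matrix.trace (ρ * kron fun k =>
    if h : (k : ℕ) < n - 1 then pauli (I ⟨k, h⟩) else pauli j)).re

/-- The 3×3 matrix `RᵀR` built from the generalized R-matrix. -/
def RtR {n : ℕ} (ρ : Matrix (Fin n → Fin 2) (Fin n → Fin 2) ℂ) :
    Matrix (Fin 3) (Fin 3) ℝ :=
  Matrix.of fun j j' => ∑ I : Fin (n - 1) → Fin 3, Rmat ρ I j * Rmat ρ I j'

open Module
open scoped RealInnerProductSpace

lemma sum_mul_le_of_antitone {n : ℕ} {μ w : Fin (n + 2) → ℝ} {K : ℝ} (hμ : Antitone μ)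
    (hw₀ : ∀ i, 0 ≤ w i) (hwK : ∀ i, w i ≤ K) (hsum : ∑ i, w i = 2 * K) :
    ∑ i, μ i * w i ≤ (μ 0 + μ 1) * K := by
  have htail : ∑ i : Fin (n + 1), μ i.succ * w i.succ ≤ μ 1 * ∑ i : Fin (n + 1), w i.succ := by
    rw [Finset.mul_sum]
    exact Finset.sum_le_sum fun i _ =>
      mul_le_mul_of_nonneg_right (hμ (Fin.succ_pos i)) (hw₀ _)
  have hμ₀₁ : μ 1 ≤ μ 0 := hμ (Fin.zero_le 1)
  rw [Fin.sum_univ_succ] at hsum ⊢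
  rw [show ∑ i : Fin (n + 1), w i.succ = 2 * K - w 0 by linarith] at htail
  nlinarith [mul_nonneg (sub_nonneg.2 hμ₀₁) (sub_nonneg.2 (hwK 0))]

lemma add_le_sqrt_mul_add {s t p q L : ℝ} (hL : 0 ≤ L)
    (hsp : s ^ 2 ≤ L * p) (htq : t ^ 2 ≤ L * q) (hst : q * s ^ 2 + p * t ^ 2 ≤ L * (p * q)) :
    s + t ≤ √(L * (p + q)) := by
  apply Real.le_sqrt_of_sq_le
  have hXY : s ^ 2 * t ^ 2 ≤ (L * p - s ^ 2) * (L * q - t ^ 2) := by nlinarith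
  have : 2 * (s * t) ≤ (L * p - s ^ 2) + (L * q - t ^ 2) := by
    nlinarith [sq_nonneg ((L * p - s ^ 2) - (L * q - t ^ 2))]
  nlinarith

variable {E F : Type*} [NormedAddCommGroup E] [InnerProductSpace ℝ E]
  [NormedAddCommGroup F] [InnerProductSpace ℝ F]

lemma exists_norm_eq_one_inner_eq_norm [Nontrivial F] (v : F) :
    ∃ a : F, ‖a‖ = 1 ∧ ⟪a, v⟫ = ‖v‖ := by
  rcases eq_or_ne v 0 with rfl | hv
  · obtain ⟨a, ha⟩ := exists_norm_eq F zero_le_one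
    exact ⟨a, ha, by simp⟩
  · refine ⟨‖v‖⁻¹ • v, by simp [norm_smul, hv], ?_⟩
    rw [real_inner_smul_left, real_inner_self_eq_norm_sq]
    field_simp

/-- Bessel's inequality for the orthogonal pair `c, c'`, with denominators cleared so that it
also holds when `c` or `c'` vanishes. -/
lemma inner_sq_add_inner_sq_le_of_inner_eq_zero {c c' : E} (h : ⟪c, c'⟫ = 0) (v : E) :
    ‖c'‖ ^ 2 * ⟪v, c⟫ ^ 2 + ‖c‖ ^ 2 * ⟪v, c'⟫ ^ 2 ≤ ‖c‖ ^ 2 * ‖c'‖ ^ 2 * ‖v‖ ^ 2 := by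
  set W := ‖c'‖ ^ 2 * ⟪v, c⟫ ^ 2 + ‖c‖ ^ 2 * ⟪v, c'⟫ ^ 2
  set z := (‖c'‖ ^ 2 * ⟪v, c⟫) • c + (‖c‖ ^ 2 * ⟪v, c'⟫) • c'
  have hvz : ⟪v, z⟫ = W := by
    simp only [z, W, inner_add_right, real_inner_smul_right]
    ring
  have hzz : ⟪z, z⟫ = ‖c‖ ^ 2 * ‖c'‖ ^ 2 * W := by
    have h' : ⟪c', c⟫ = 0 := by rw [real_inner_comm, h]
    simp only [z, W, inner_add_left, inner_add_right, real_inner_smul_left, real_inner_smul_right,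
      h, h']
    rw [real_inner_self_eq_norm_sq, real_inner_self_eq_norm_sq]
    ring
  have hcs := real_inner_mul_inner_self_le v z
  rw [hvz, hzz, real_inner_self_eq_norm_sq] at hcs
  have hW : 0 ≤ W := by positivity
  have hK : 0 ≤ ‖c‖ ^ 2 * ‖c'‖ ^ 2 * ‖v‖ ^ 2 := by positivity
  nlinarith

namespace LinearMap.IsSymmetric

variable [FiniteDimensional ℝ E] {S : E →ₗ[ℝ] E} (hS : S.IsSymmetric) {n : ℕ}

lemma inner_apply_self_eq_sum (hn : finrank ℝ E = n) (x : E) :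
    ⟪S x, x⟫ = ∑ i, hS.eigenvalues hn i * ⟪hS.eigenvectorBasis hn i, x⟫ ^ 2 := by
  rw [← (hS.eigenvectorBasis hn).sum_inner_mul_inner (S x) x]
  refine Finset.sum_congr rfl fun i _ => ?_
  rw [hS, hS.apply_eigenvectorBasis, real_inner_smul_right, real_inner_comm]
  simp only [RCLike.ofReal_real_eq_id, id_eq]
  ring

lemma inner_apply_self_le (hn : finrank ℝ E = n + 1) (x : E) :
    ⟪S x, x⟫ ≤ hS.eigenvalues hn 0 * ‖x‖ ^ 2 := by
  rw [hS.inner_apply_self_eq_sum hn, ← (hS.eigenvectorBasis hn).sum_sq_inner_right x,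
    Finset.mul_sum]
  exact Finset.sum_le_sum fun i _ =>
    mul_le_mul_of_nonneg_right (hS.eigenvalues_antitone hn (Fin.zero_le i)) (sq_nonneg _)

/-- Ky Fan's inequality for two vectors, in a form homogeneous in `c` and in `c'`. -/
lemma inner_apply_self_add_le (hn : finrank ℝ E = n + 2) {c c' : E} (h : ⟪c, c'⟫ = 0) :
    ‖c'‖ ^ 2 * ⟪S c, c⟫ + ‖c‖ ^ 2 * ⟪S c', c'⟫ ≤
      (hS.eigenvalues hn 0 + hS.eigenvalues hn 1) * (‖c‖ ^ 2 * ‖c'‖ ^ 2) := by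
  set b := hS.eigenvectorBasis hn
  rw [hS.inner_apply_self_eq_sum hn, hS.inner_apply_self_eq_sum hn, Finset.mul_sum,
    Finset.mul_sum, ← Finset.sum_add_distrib]
  calc _ = ∑ i, hS.eigenvalues hn i * (‖c'‖ ^ 2 * ⟪b i, c⟫ ^ 2 + ‖c‖ ^ 2 * ⟪b i, c'⟫ ^ 2) :=
        Finset.sum_congr rfl fun i _ => by ring
    _ ≤ _ := by
      refine sum_mul_le_of_antitone (hS.eigenvalues_antitone hn) (fun i => by positivity)
        (fun i => ?_) ?_
      · simpa [b.norm_eq_one] using inner_sq_add_inner_sq_le_of_inner_eq_zero h (b i)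
      · rw [Finset.sum_add_distrib, ← Finset.mul_sum, ← Finset.mul_sum, b.sum_sq_inner_right,
          b.sum_sq_inner_right]
        ring

end LinearMap.IsSymmetric

section Bell

variable [FiniteDimensional ℝ E] [FiniteDimensional ℝ F] (T : E →ₗ[ℝ] F) {n : ℕ}

/-- The eigenvalues of `T†T`, sorted decreasingly: indices `0` and `1` are the two largest. -/
noncomputable def sqSingularValues (hn : finrank ℝ E = n) : Fin n → ℝ :=
  (LinearMap.isSymmetric_adjoint_comp_self T).eigenvalues hn

/-- For `T` the correlation matrix `R`, `⟪a, T b⟫ = Re Tr(ρ · (a·σ) ⊗ (b·σ))`, so these are the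
values `Re Tr(ρ B₂)` with `a, a', b, b'` the vectors of `A₁, A₁′, A₂, A₂′`. -/
def bellValues : Set ℝ :=
  {x | ∃ (a a' : F) (b b' : E), ‖a‖ = 1 ∧ ‖a'‖ = 1 ∧ ‖b‖ = 1 ∧ ‖b'‖ = 1 ∧
    x = ⟪a, T (b + b')⟫ + ⟪a', T (b - b')⟫}

lemma sqSingularValues_antitone (hn : finrank ℝ E = n) : Antitone (sqSingularValues T hn) :=
  (LinearMap.isSymmetric_adjoint_comp_self T).eigenvalues_antitone hn

lemma inner_adjoint_comp_self_apply (x : E) :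
    ⟪(LinearMap.adjoint T ∘ₗ T) x, x⟫ = ‖T x‖ ^ 2 := by
  rw [LinearMap.comp_apply, LinearMap.adjoint_inner_left, real_inner_self_eq_norm_sq]

lemma sq_norm_apply_eigenvectorBasis (hn : finrank ℝ E = n) (i : Fin n) :
    ‖T ((LinearMap.isSymmetric_adjoint_comp_self T).eigenvectorBasis hn i)‖ ^ 2 =
      sqSingularValues T hn i := by
  set hS := LinearMap.isSymmetric_adjoint_comp_self T
  rw [← inner_adjoint_comp_self_apply, hS.apply_eigenvectorBasis, real_inner_smul_left,
    real_inner_self_eq_norm_sq, (hS.eigenvectorBasis hn).norm_eq_one]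
  simp [sqSingularValues]

lemma sqSingularValues_nonneg (hn : finrank ℝ E = n) (i : Fin n) :
    0 ≤ sqSingularValues T hn i :=
  sq_norm_apply_eigenvectorBasis T hn i ▸ sq_nonneg _

lemma inner_add_inner_le {a a' : F} {b b' : E} (ha : ‖a‖ = 1) (ha' : ‖a'‖ = 1)
    (hb : ‖b‖ = 1) (hb' : ‖b'‖ = 1) (hn : finrank ℝ E = n + 2) :
    ⟪a, T (b + b')⟫ + ⟪a', T (b - b')⟫ ≤
      2 * √(sqSingularValues T hn 0 + sqSingularValues T hn 1) := by
  set hS := LinearMap.isSymmetric_adjoint_comp_self T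
  set c := b + b'
  set c' := b - b'
  have horth : ⟪c, c'⟫ = 0 := real_inner_add_sub_eq_zero_iff b b' |>.2 (hb.trans hb'.symm)
  have hnorm : ‖c‖ ^ 2 + ‖c'‖ ^ 2 = 4 := by
    have := parallelogram_law_with_norm ℝ b b'
    rw [hb, hb'] at this
    nlinarith
  have hσ₀ := sqSingularValues_nonneg T hn 0
  have hσ₁ := sqSingularValues_nonneg T hn 1
  have hrayleigh (x : E) :
      ‖T x‖ ^ 2 ≤ (sqSingularValues T hn 0 + sqSingularValues T hn 1) * ‖x‖ ^ 2 := by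
    have : ‖T x‖ ^ 2 ≤ sqSingularValues T hn 0 * ‖x‖ ^ 2 :=
      inner_adjoint_comp_self_apply T x ▸ hS.inner_apply_self_le hn x
    nlinarith [sq_nonneg ‖x‖]
  have hkyfan : ‖c'‖ ^ 2 * ‖T c‖ ^ 2 + ‖c‖ ^ 2 * ‖T c'‖ ^ 2 ≤
      (sqSingularValues T hn 0 + sqSingularValues T hn 1) * (‖c‖ ^ 2 * ‖c'‖ ^ 2) := by
    have h := hS.inner_apply_self_add_le hn horth
    rw [inner_adjoint_comp_self_apply, inner_adjoint_comp_self_apply] at h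
    exact h
  calc ⟪a, T c⟫ + ⟪a', T c'⟫ ≤ ‖T c‖ + ‖T c'‖ := by
        gcongr
        · simpa [ha] using real_inner_le_norm a (T c)
        · simpa [ha'] using real_inner_le_norm a' (T c')
    _ ≤ √((sqSingularValues T hn 0 + sqSingularValues T hn 1) * (‖c‖ ^ 2 + ‖c'‖ ^ 2)) :=
        add_le_sqrt_mul_add (add_nonneg hσ₀ hσ₁) (hrayleigh c) (hrayleigh c') hkyfan
    _ = 2 * √(sqSingularValues T hn 0 + sqSingularValues T hn 1) := by
        rw [hnorm, Real.sqrt_mul' _ (by norm_num), show (4 : ℝ) = 2 ^ 2 by norm_num,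
          Real.sqrt_sq (by norm_num), mul_comm]

lemma exists_le_norm_add_norm_sub (hn : finrank ℝ E = n + 2) :
    ∃ b b' : E, ‖b‖ = 1 ∧ ‖b'‖ = 1 ∧
      2 * √(sqSingularValues T hn 0 + sqSingularValues T hn 1) ≤ ‖T (b + b')‖ + ‖T (b - b')‖ := by
  set e := (LinearMap.isSymmetric_adjoint_comp_self T).eigenvectorBasis hn
  have hσ (i : Fin (n + 2)) : ‖T (e i)‖ = √(sqSingularValues T hn i) := by
    rw [← sq_norm_apply_eigenvectorBasis, Real.sqrt_sq (norm_nonneg _)]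
  have hσ₀ := sqSingularValues_nonneg T hn 0
  have hσ₁ := sqSingularValues_nonneg T hn 1
  set σ := sqSingularValues T hn
  set s := √(σ 0 + σ 1)
  rcases eq_or_ne s 0 with hs | hs
  · exact ⟨e 0, e 0, e.norm_eq_one 0, e.norm_eq_one 0, by rw [hs, mul_zero]; positivity⟩
  have hs_sq : s ^ 2 = σ 0 + σ 1 := Real.sq_sqrt (add_nonneg hσ₀ hσ₁)
  set α := √(σ 0) / s
  set β := √(σ 1) / s
  have hαβ : α ^ 2 + β ^ 2 = 1 := by
    rw [div_pow, div_pow, Real.sq_sqrt hσ₀, Real.sq_sqrt hσ₁, ← add_div, ← hs_sq,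
      div_self (pow_ne_zero 2 hs)]
  have horth : ⟪α • e 0, β • e 1⟫ = 0 := by
    rw [real_inner_smul_left, real_inner_smul_right,
      e.orthonormal.2 (show (0 : Fin (n + 2)) ≠ 1 by simp), mul_zero, mul_zero]
  have hunit (v : E) (hv : ‖v‖ * ‖v‖ = ‖α • e 0‖ * ‖α • e 0‖ + ‖β • e 1‖ * ‖β • e 1‖) :
      ‖v‖ = 1 := by
    simp only [norm_smul, e.norm_eq_one, mul_one, Real.norm_eq_abs] at hv
    nlinarith [norm_nonneg v, sq_abs α, sq_abs β]
  refine ⟨α • e 0 + β • e 1, α • e 0 - β • e 1,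
    hunit _ (norm_add_sq_eq_norm_sq_add_norm_sq_real horth),
    hunit _ (norm_sub_sq_eq_norm_sq_add_norm_sq_real horth), le_of_eq ?_⟩
  have hplus : α • e 0 + β • e 1 + (α • e 0 - β • e 1) = (2 * α) • e 0 := by module
  have hminus : α • e 0 + β • e 1 - (α • e 0 - β • e 1) = (2 * β) • e 1 := by module
  rw [hplus, hminus, map_smul, map_smul, norm_smul, norm_smul, hσ, hσ,
    Real.norm_of_nonneg (by positivity), Real.norm_of_nonneg (by positivity)]
  have hαβs : α * √(σ 0) + β * √(σ 1) = s := by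
    rw [div_mul_eq_mul_div, div_mul_eq_mul_div, ← add_div, Real.mul_self_sqrt hσ₀,
      Real.mul_self_sqrt hσ₁, ← hs_sq]
    field_simp
  linarith

theorem isGreatest_bellValues [Nontrivial F] (hn : finrank ℝ E = n + 2) :
    IsGreatest (bellValues T) (2 * √(sqSingularValues T hn 0 + sqSingularValues T hn 1)) := by
  refine ⟨?_, fun x ⟨a, a', b, b', ha, ha', hb, hb', hx⟩ =>
    hx ▸ inner_add_inner_le T ha ha' hb hb' hn⟩
  obtain ⟨b, b', hb, hb', hle⟩ := exists_le_norm_add_norm_sub T hn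
  obtain ⟨a, ha, ha_eq⟩ := exists_norm_eq_one_inner_eq_norm (T (b + b'))
  obtain ⟨a', ha', ha'_eq⟩ := exists_norm_eq_one_inner_eq_norm (T (b - b'))
  refine ⟨a, a', b, b', ha, ha', hb, hb', le_antisymm ?_ (inner_add_inner_le T ha ha' hb hb' hn)⟩
  rwa [ha_eq, ha'_eq]

end Bell

lemma roots_charpoly_transpose_mul_self {m k : Type*} [Fintype m] [DecidableEq m] [Fintype k]
    [DecidableEq k] (A : Matrix m k ℝ) {n : ℕ} (hn : finrank ℝ (EuclideanSpace ℝ k) = n) :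
    (Aᵀ * A).charpoly.roots = List.ofFn (sqSingularValues (toEuclideanLin A) hn) := by
  have hgram :
      LinearMap.adjoint (toEuclideanLin A) ∘ₗ toEuclideanLin A = toEuclideanLin (Aᵀ * A) := by
    rw [← Matrix.toEuclideanLin_conjTranspose_eq_adjoint, conjTranspose_eq_transpose_of_trivial,
      toLpLin_mul_same]
  rw [← Matrix.charpoly_toLin (Aᵀ * A) (PiLp.basisFun 2 ℝ k), ← toLpLin_eq_toLin, ← hgram,
    (LinearMap.isSymmetric_adjoint_comp_self _).roots_charpoly_eq_eigenvalues hn, Fin.univ_val_map]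
  simp [sqSingularValues]

lemma norm_toLp_eq_one_iff {m : Type*} [Fintype m] (x : m → ℝ) :
    ‖WithLp.toLp 2 x‖ = 1 ↔ ∑ i, x i ^ 2 = 1 := by
  simp [EuclideanSpace.norm_eq, Real.sqrt_eq_one]

lemma inner_toEuclideanLin {m : Type*} [Fintype m] [DecidableEq m] (M : Matrix m m ℝ)
    (x y : EuclideanSpace ℝ m) : ⟪x, toEuclideanLin M y⟫ = x.ofLp ⬝ᵥ (M *ᵥ y.ofLp) := by
  rw [EuclideanSpace.inner_eq_star_dotProduct, star_trivial, dotProduct_comm]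
  rfl

section TwoQubit

variable (ρ : Matrix (Fin 2 → Fin 2) (Fin 2 → Fin 2) ℂ)

def corrMatrix : Matrix (Fin 3) (Fin 3) ℝ :=
  Matrix.of fun i j => (trace (ρ * kron ![pauli i, pauli j])).re

lemma RtR_eq_transpose_mul : RtR ρ = (corrMatrix ρ)ᵀ * corrMatrix ρ := by
  have hRmat (I : Fin (2 - 1) → Fin 3) (j : Fin 3) : Rmat ρ I j = corrMatrix ρ (I 0) j := by
    have h : (fun k : Fin 2 => if h : (k : ℕ) < 2 - 1 then pauli (I ⟨k, h⟩) else pauli j)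
        = ![pauli (I 0), pauli j] := by
      funext k
      fin_cases k <;> simp
    simp only [Rmat, h]
    rfl
  ext j j'
  simp only [RtR, Matrix.of_apply, hRmat, Matrix.mul_apply, Matrix.transpose_apply]
  exact Fintype.sum_equiv (Equiv.funUnique (Fin 1) (Fin 3)) _ _ fun I => rfl

lemma opOf_add (x y : Fin 3 → ℝ) : opOf (x + y) = opOf x + opOf y := by
  simp [opOf, add_smul, Finset.sum_add_distrib]

lemma opOf_sub (x y : Fin 3 → ℝ) : opOf (x - y) = opOf x - opOf y := by
  simp [opOf, sub_smul, Finset.sum_sub_distrib]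

lemma kron_opOf_eq_sum (x y : Fin 3 → ℝ) :
    kron ![opOf x, opOf y] = ∑ i, ∑ j, ((x i * y j : ℝ) : ℂ) • kron ![pauli i, pauli j] := by
  ext f g
  simp only [kron, opOf, Matrix.of_apply, Fin.prod_univ_two, Matrix.cons_val_zero,
    Matrix.cons_val_one, Matrix.sum_apply, Matrix.smul_apply, smul_eq_mul, Finset.sum_mul_sum]
  push_cast
  exact Finset.sum_congr rfl fun i _ => Finset.sum_congr rfl fun j _ => by ring

lemma re_trace_mul_kron_opOf (x y : Fin 3 → ℝ) :
    (trace (ρ * kron ![opOf x, opOf y])).re = x ⬝ᵥ (corrMatrix ρ *ᵥ y) := by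
  simp only [kron_opOf_eq_sum, Matrix.mul_smul, trace_sum, trace_smul, re_sum, smul_eq_mul,
    re_ofReal_mul, dotProduct, mulVec, Finset.mul_sum, corrMatrix, Matrix.of_apply]
  exact Finset.sum_congr rfl fun i _ => Finset.sum_congr rfl fun j _ => by ring

lemma re_trace_mul_bellOp (a a' : Fin 2 → Fin 3 → ℝ) :
    (trace (ρ *
      (kron (fun k => if (k : ℕ) = 2 - 1 then opOf (a k) + opOf (a' k) else opOf (a k))
      + kron (fun k => if (k : ℕ) = 2 - 1 then opOf (a k) - opOf (a' k) else opOf (a' k))))).re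
    = a 0 ⬝ᵥ (corrMatrix ρ *ᵥ (a 1 + a' 1)) + a' 0 ⬝ᵥ (corrMatrix ρ *ᵥ (a 1 - a' 1)) := by
  have hsum : (fun k : Fin 2 => if (k : ℕ) = 2 - 1 then opOf (a k) + opOf (a' k) else opOf (a k))
      = ![opOf (a 0), opOf (a 1 + a' 1)] := by
    funext k
    fin_cases k <;> simp [opOf_add]
  have hdiff : (fun k : Fin 2 => if (k : ℕ) = 2 - 1 then opOf (a k) - opOf (a' k) else opOf (a' k))
      = ![opOf (a' 0), opOf (a 1 - a' 1)] := by
    funext k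
    fin_cases k <;> simp [opOf_sub]
  rw [hsum, hdiff, Matrix.mul_add, trace_add, add_re, re_trace_mul_kron_opOf,
    re_trace_mul_kron_opOf]

lemma setOf_bellOp_eq_bellValues :
    {x : ℝ | ∃ B, IsBellOp 2 B ∧ x = (trace (ρ * B)).re} =
      bellValues (toEuclideanLin (corrMatrix ρ)) := by
  ext x
  constructor
  · rintro ⟨B, ⟨a, a', ha, ha', rfl⟩, rfl⟩
    refine ⟨.toLp 2 (a 0), .toLp 2 (a' 0), .toLp 2 (a 1), .toLp 2 (a' 1),
      (norm_toLp_eq_one_iff _).2 (ha 0), (norm_toLp_eq_one_iff _).2 (ha' 0),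
      (norm_toLp_eq_one_iff _).2 (ha 1), (norm_toLp_eq_one_iff _).2 (ha' 1), ?_⟩
    rw [re_trace_mul_bellOp, inner_toEuclideanLin, inner_toEuclideanLin]
    rfl
  · rintro ⟨a, a', b, b', ha, ha', hb, hb', rfl⟩
    refine ⟨_, ⟨![a.ofLp, b.ofLp], ![a'.ofLp, b'.ofLp], ?_, ?_, rfl⟩, ?_⟩
    · intro k
      fin_cases k <;> simpa [← norm_toLp_eq_one_iff]
    · intro k
      fin_cases k <;> simpa [← norm_toLp_eq_one_iff]
    · rw [re_trace_mul_bellOp, inner_toEuclideanLin, inner_toEuclideanLin]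
      rfl

end TwoQubit

theorem two_qubit_bell_max_general
    (ρ : Matrix (Fin 2 → Fin 2) (Fin 2 → Fin 2) ℂ)
    (u₁sq u₂sq u₃sq : ℝ) (h12 : u₂sq ≤ u₁sq) (h23 : u₃sq ≤ u₂sq)
    (hchar : (RtR ρ).charpoly =
      (X - C u₁sq) * (X - C u₂sq) * (X - C u₃sq)) :
    IsGreatest {x : ℝ | ∃ B, IsBellOp 2 B ∧ x = (Matrix.trace (ρ * B)).re}
      (2 * Real.sqrt (u₁sq + u₂sq)) := by
  have hn : finrank ℝ (EuclideanSpace ℝ (Fin 3)) = 1 + 2 := finrank_euclideanSpace_fin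
  set σ := sqSingularValues (toEuclideanLin (corrMatrix ρ)) hn
  have hperm : (List.ofFn σ).Perm [u₁sq, u₂sq, u₃sq] := by
    rw [← Multiset.coe_eq_coe, ← roots_charpoly_transpose_mul_self, ← RtR_eq_transpose_mul, hchar]
    convert roots_multiset_prod_X_sub_C ([u₁sq, u₂sq, u₃sq] : Multiset ℝ) using 2
    simp [mul_assoc]
  have hσ : List.ofFn σ = [u₁sq, u₂sq, u₃sq] :=
    hperm.eq_of_sortedGE (sqSingularValues_antitone _ hn).sortedGE_ofFn
      (List.sortedGE_iff_pairwise.2 (by simp [h12, h23, h23.trans h12]))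
  simp only [List.ofFn_succ, List.ofFn_zero, List.cons.injEq] at hσ
  rw [setOf_bellOp_eq_bellValues, ← hσ.1, ← hσ.2.1]
  exact isGreatest_bellValues _ hn

/-- For a two-qubit density matrix `ρ`, `2√(u₁² + u₂²)` (with `u₁² ≥ u₂² ≥ u₃²` the
eigenvalues of `RᵀR`) is the maximum of `Re Tr(ρ·B₂)` over two-qubit Bell operators. -/
theorem two_qubit_bell_max
    (ρ : Matrix (Fin 2 → Fin 2) (Fin 2 → Fin 2) ℂ)
    (hρ : ρ.PosSemidef) (htr : Matrix.trace ρ = 1)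
    (u₁sq u₂sq u₃sq : ℝ) (h12 : u₂sq ≤ u₁sq) (h23 : u₃sq ≤ u₂sq)
    (hchar : (RtR ρ).charpoly =
      (X - C u₁sq) * (X - C u₂sq) * (X - C u₃sq)) :
    IsGreatest {x : ℝ | ∃ B, IsBellOp 2 B ∧ x = (Matrix.trace (ρ * B)).re}
      (2 * Real.sqrt (u₁sq + u₂sq)) :=
  two_qubit_bell_max_general ρ u₁sq u₂sq u₃sq h12 h23 hchar
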